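/- Let A be a real M×N matrix, τ, σ > 0, and set C = √(τσ‖AᵀA‖_op). If C < 1, then for all x ∈ ℝᴺ and y ∈ ℝᴹ, (2 − 2C)·yᵀAx ≤ C·((1/τ)‖x‖² + (1/σ)‖y‖² − 2 yᵀAx). In particular, writing ‖u‖²_M = (1/τ)‖x‖² − 2yᵀAx + (1/σ)‖y‖², we have 2 yᵀAx ≤ (C/(1−C))·‖u‖²_M. -/

import Mathlib

open Real

/-- Weighted AM–GM: the product of the two summands on the right is `(a * b) ^ 2`. -/
lemma two_mul_le_sqrt_mul_mul_add {τ σ : ℝ} (hτ : 0 < τ) (hσ : 0 < σ) (a b : ℝ) :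
    2 * a * b ≤ √(τ * σ) * ((1 / τ) * a ^ 2 + (1 / σ) * b ^ 2) := by
  set p := √(τ * σ) * (1 / τ) * a ^ 2
  set q := √(τ * σ) * (1 / σ) * b ^ 2
  have hp : 0 ≤ p := by positivity
  have hq : 0 ≤ q := by positivity
  have hpq : p * q = (a * b) ^ 2 := by
    have hsq : √(τ * σ) ^ 2 = τ * σ := sq_sqrt (by positivity)
    calc p * q = √(τ * σ) ^ 2 * (1 / τ) * (1 / σ) * (a * b) ^ 2 := by simp only [p, q]; ring
      _ = (a * b) ^ 2 := by rw [hsq]; field_simp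
  have : 2 * a * b ≤ p + q := by nlinarith [sq_nonneg (p - q), sq_nonneg (p + q - 2 * a * b)]
  linarith

lemma ContinuousLinearMap.sqrt_mul_norm_adjoint_comp_self {𝕜 E F : Type*} [RCLike 𝕜]
    [NormedAddCommGroup E] [InnerProductSpace 𝕜 E] [CompleteSpace E]
    [NormedAddCommGroup F] [InnerProductSpace 𝕜 F] [CompleteSpace F]
    (A : E →L[𝕜] F) (c : ℝ) :
    √(c * ‖(ContinuousLinearMap.adjoint A).comp A‖) = √c * ‖A‖ := by
  rw [A.norm_adjoint_comp_self, sqrt_mul' c (by positivity), sqrt_mul_self (norm_nonneg A)]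

lemma ContinuousLinearMap.two_mul_inner_le {E F : Type*}
    [NormedAddCommGroup E] [InnerProductSpace ℝ E] [NormedAddCommGroup F] [InnerProductSpace ℝ F]
    (A : E →L[ℝ] F) {τ σ : ℝ} (hτ : 0 < τ) (hσ : 0 < σ) (x : E) (y : F) :
    2 * inner ℝ y (A x) ≤ √(τ * σ) * ‖A‖ * ((1 / τ) * ‖x‖ ^ 2 + (1 / σ) * ‖y‖ ^ 2) := by
  have hA : inner ℝ y (A x) ≤ ‖A‖ * ‖x‖ * ‖y‖ :=
    calc inner ℝ y (A x) ≤ ‖y‖ * ‖A x‖ := real_inner_le_norm y (A x)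
      _ ≤ ‖y‖ * (‖A‖ * ‖x‖) := by gcongr; exact A.le_opNorm x
      _ = ‖A‖ * ‖x‖ * ‖y‖ := by ring
  calc 2 * inner ℝ y (A x) ≤ ‖A‖ * (2 * ‖x‖ * ‖y‖) := by linarith
    _ ≤ ‖A‖ * (√(τ * σ) * ((1 / τ) * ‖x‖ ^ 2 + (1 / σ) * ‖y‖ ^ 2)) :=
        mul_le_mul_of_nonneg_left (two_mul_le_sqrt_mul_mul_add hτ hσ _ _) (norm_nonneg A)
    _ = _ := by ring

/-- With `C = √(τσ‖AᵀA‖_op) < 1`, one has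
`(2 − 2C)·yᵀAx ≤ C·((1/τ)‖x‖² + (1/σ)‖y‖² − 2yᵀAx)` and consequently
`2 yᵀAx ≤ (C/(1−C))·‖u‖²_M` where `‖u‖²_M = (1/τ)‖x‖² − 2yᵀAx + (1/σ)‖y‖²`. -/
theorem stmt_2 {N M : ℕ}
    (A : EuclideanSpace ℝ (Fin N) →L[ℝ] EuclideanSpace ℝ (Fin M))
    (τ σ : ℝ) (hτ : 0 < τ) (hσ : 0 < σ)
    (C : ℝ) (hC : C = Real.sqrt (τ * σ * ‖(ContinuousLinearMap.adjoint A).comp A‖))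
    (hC1 : C < 1) :
    ∀ (x : EuclideanSpace ℝ (Fin N)) (y : EuclideanSpace ℝ (Fin M)),
      ((2 - 2 * C) * (inner ℝ y (A x) : ℝ)
          ≤ C * ((1 / τ) * ‖x‖ ^ 2 + (1 / σ) * ‖y‖ ^ 2 - 2 * (inner ℝ y (A x) : ℝ))) ∧
      (2 * (inner ℝ y (A x) : ℝ)
          ≤ (C / (1 - C))
              * ((1 / τ) * ‖x‖ ^ 2 - 2 * (inner ℝ y (A x) : ℝ) + (1 / σ) * ‖y‖ ^ 2)) := by
  intro x y
  rw [A.sqrt_mul_norm_adjoint_comp_self] at hC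
  have key := A.two_mul_inner_le hτ hσ x y
  rw [← hC] at key
  refine ⟨by linarith, ?_⟩
  rw [div_mul_eq_mul_div, le_div_iff₀ (sub_pos.2 hC1)]
  linarith
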